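/- Let R be a ring, G a group, χ: G → ℤ a surjective homomorphism with kernel N, and t ∈ G with χ(t) = 1. Then there is a short exact sequence of left R[N]-modules 0 → R[G] → \widehat{R[G]}^χ ⊕ \widehat{R[G]}^{-χ} → ∏_{ℤ} R[N] → 0, where the maps are induced by writing elements as series ∑_{i∈ℤ} λ_i t^i with λ_i ∈ R[N]. -/

import Mathlib

/-!
Every `g ∈ G` factors uniquely as `g = n * t ^ i` with `n ∈ N = ker χ` and `i = χ g`, so a function
`G → R` is the same as a `ℤ`-indexed family of functions `N → R` (its values on the cosets
`N t^i`). The `χ`-Novikov condition says that these are finitely supported and vanish for `i ≪ 0`,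
the `-χ`-condition that they are finitely supported and vanish for `i ≫ 0`. If two such series have
the same expansion they are one function satisfying both conditions, hence finitely supported, i.e.
an element of `R[G]`; an arbitrary family `(λ_i)` is the difference of its part in degrees `i ≥ 0`
and minus its part in degrees `i < 0`. Left multiplication by `R[N]` preserves every coset `N t^i`,
which gives `R[N]`-linearity.
-/

noncomputable section
open Function MulOpposite

/-- `IsFP S n M`: the `S`-module `M` is of type `FPₙ`. -/
def IsFP (S : Type) [Ring S] : ℕ → ModuleCat.{0} S → Prop
  | 0, M => Module.Finite S M
  | n+1, M => ∃ (d : ℕ) (φ : (Fin d → S) →ₗ[S] M), Function.Surjective φ ∧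
      IsFP S n (ModuleCat.of S (LinearMap.ker φ))

/-- Unbundled version of `IsFP`. -/
def IsFPMod (S : Type) [Ring S] (n : ℕ) (M : Type) [AddCommGroup M] [Module S M] : Prop :=
  IsFP S n (ModuleCat.of S M)

section RTensor

variable (R : Type) [Ring R] (M : Type) [AddCommGroup M] [Module Rᵐᵒᵖ M]
  (N : Type) [AddCommGroup N] [Module R N]

/-- The balancing relations for the tensor product of a right `R`-module `M`
(i.e. a left `Rᵐᵒᵖ`-module) and a left `R`-module `N`. -/
def RTensor.rel : AddSubgroup (TensorProduct ℤ M N) :=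
  AddSubgroup.closure {x | ∃ (r : R) (m : M) (n : N),
    x = ((op r • m) ⊗ₜ[ℤ] n) - (m ⊗ₜ[ℤ] (r • n))}

/-- The balanced tensor product `M ⊗_R N` of a right `R`-module and a left `R`-module,
as an abelian group. -/
def RTensor : Type := TensorProduct ℤ M N ⧸ RTensor.rel R M N

instance : AddCommGroup (RTensor R M N) :=
  inferInstanceAs (AddCommGroup (TensorProduct ℤ M N ⧸ RTensor.rel R M N))

/-- The canonical projection. -/
def RTensor.mk : TensorProduct ℤ M N →+ RTensor R M N :=
  QuotientAddGroup.mk' (RTensor.rel R M N)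

/-- Elementary tensors in `RTensor`. -/
def RTensor.tmul (m : M) (n : N) : RTensor R M N := RTensor.mk R M N (m ⊗ₜ[ℤ] n)

theorem RTensor.tmul_balanced (r : R) (m : M) (n : N) :
    RTensor.tmul R M N (op r • m) n = RTensor.tmul R M N m (r • n) := by
  refine (QuotientAddGroup.mk'_eq_mk' _).2 ⟨(m ⊗ₜ[ℤ] (r • n)) - ((op r • m) ⊗ₜ[ℤ] n), ?_, by abel⟩
  have h : ((op r • m) ⊗ₜ[ℤ] n) - (m ⊗ₜ[ℤ] (r • n)) ∈ RTensor.rel R M N :=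
    AddSubgroup.subset_closure ⟨r, m, n, rfl⟩
  simpa [neg_sub] using AddSubgroup.neg_mem _ h

theorem RTensor.tmul_add (m : M) (n n' : N) :
    RTensor.tmul R M N m (n + n') = RTensor.tmul R M N m n + RTensor.tmul R M N m n' := by
  rw [RTensor.tmul, TensorProduct.tmul_add, map_add]; rfl

theorem RTensor.add_tmul (m m' : M) (n : N) :
    RTensor.tmul R M N (m + m') n = RTensor.tmul R M N m n + RTensor.tmul R M N m' n := by
  rw [RTensor.tmul, TensorProduct.add_tmul, map_add]; rfl

theorem RTensor.tmul_zero (m : M) : RTensor.tmul R M N m 0 = 0 := by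
  rw [RTensor.tmul, TensorProduct.tmul_zero, map_zero]

theorem RTensor.zero_tmul (n : N) : RTensor.tmul R M N (0 : M) n = 0 := by
  rw [RTensor.tmul, TensorProduct.zero_tmul, map_zero]

variable {R M N}

/-- Lifting a balanced biadditive map to the balanced tensor product. -/
def RTensor.lift {A : Type} [AddCommGroup A] (f : M →+ N →+ A)
    (hf : ∀ (r : R) (m : M) (n : N), f (op r • m) n = f m (r • n)) :
    RTensor R M N →+ A := by
  refine QuotientAddGroup.lift (RTensor.rel R M N)
    (TensorProduct.lift (LinearMap.mk₂ ℤ (fun m n => f m n)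
      (by intro m₁ m₂ n; simp)
      (by intro z m n; simp)
      (by intro m n₁ n₂; simp)
      (by intro z m n; simp))).toAddMonoidHom ?_
  unfold RTensor.rel
  refine (AddSubgroup.closure_le _).2 ?_
  rintro x ⟨r, m, n, rfl⟩
  simp [hf r m n]

@[simp] theorem RTensor.lift_tmul {A : Type} [AddCommGroup A] (f : M →+ N →+ A)
    (hf : ∀ (r : R) (m : M) (n : N), f (op r • m) n = f m (r • n)) (m : M) (n : N) :
    RTensor.lift f hf (RTensor.tmul R M N m n) = f m n := by
  show QuotientAddGroup.lift _ _ _ (QuotientAddGroup.mk (m ⊗ₜ[ℤ] n)) = _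
  erw [QuotientAddGroup.lift_mk]

end RTensor

section Maps

variable (R : Type) [Ring R] (M : Type) [AddCommGroup M] [Module Rᵐᵒᵖ M]
  {N N' : Type} [AddCommGroup N] [Module R N] [AddCommGroup N'] [Module R N']

/-- Functoriality of the balanced tensor product in the left-module variable. -/
def RTensor.mapRight (g : N →ₗ[R] N') : RTensor R M N →+ RTensor R M N' :=
  RTensor.lift
    { toFun := fun m =>
        { toFun := fun n => RTensor.tmul R M N' m (g n)
          map_zero' := by
            show RTensor.tmul R M N' m (g 0) = 0
            rw [map_zero]; exact RTensor.tmul_zero R M N' m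
          map_add' := by
            intro n n'
            show RTensor.tmul R M N' m (g (n + n')) = _
            rw [map_add]; exact RTensor.tmul_add R M N' m _ _ }
      map_zero' := by
        ext n
        show RTensor.tmul R M N' 0 (g n) = 0
        exact RTensor.zero_tmul R M N' _
      map_add' := by
        intro m m'
        ext n
        show RTensor.tmul R M N' (m + m') (g n) = _
        exact RTensor.add_tmul R M N' m m' _ }
    (by
      intro r m n
      show RTensor.tmul R M N' (op r • m) (g n) = RTensor.tmul R M N' m (g (r • n))
      rw [map_smul]
      exact RTensor.tmul_balanced R M N' r m (g n))

end Maps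

section MapLeft

variable (R : Type) [Ring R] {M M' : Type} [AddCommGroup M] [Module Rᵐᵒᵖ M]
  [AddCommGroup M'] [Module Rᵐᵒᵖ M'] (N : Type) [AddCommGroup N] [Module R N]

/-- Functoriality of the balanced tensor product in the right-module variable. -/
def RTensor.mapLeft (g : M →ₗ[Rᵐᵒᵖ] M') : RTensor R M N →+ RTensor R M' N :=
  RTensor.lift
    { toFun := fun m =>
        { toFun := fun n => RTensor.tmul R M' N (g m) n
          map_zero' := RTensor.tmul_zero R M' N _
          map_add' := fun n n' => RTensor.tmul_add R M' N _ n n' }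
      map_zero' := by
        ext n
        show RTensor.tmul R M' N (g 0) n = 0
        rw [map_zero]; exact RTensor.zero_tmul R M' N n
      map_add' := by
        intro m m'
        ext n
        show RTensor.tmul R M' N (g (m + m')) n = _
        rw [map_add]; exact RTensor.add_tmul R M' N _ _ n }
    (by
      intro r m n
      show RTensor.tmul R M' N (g (op r • m)) n = RTensor.tmul R M' N (g m) (r • n)
      rw [map_smul]
      exact RTensor.tmul_balanced R M' N r (g m) n)

end MapLeft

section Resolutions

variable (S : Type) [Ring S] (N : Type) [AddCommGroup N] [Module S N]

/-- A free resolution `⋯ → F₂ → F₁ → F₀ → N → 0` of a left `S`-module `N`. -/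
structure FreeResolution : Type 1 where
  ι : ℕ → Type
  d : ∀ n : ℕ, ((ι (n+1)) →₀ S) →ₗ[S] ((ι n) →₀ S)
  augm : ((ι 0) →₀ S) →ₗ[S] N
  augm_surj : Function.Surjective augm
  exact_augm : Function.Exact (d 0) augm
  exact : ∀ n : ℕ, Function.Exact (d (n+1)) (d n)

variable (M : Type) [AddCommGroup M] [Module Sᵐᵒᵖ M]

/-- `TorVanishes S M N i` asserts that `Tor_i^S(M, N) = 0`, where `M` is a right
`S`-module and `N` is a left `S`-module: for every free resolution `F_• → N`, the
complex `M ⊗_S F_•` has trivial homology in degree `i`. -/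
def TorVanishes : ℕ → Prop
  | 0 => ∀ res : FreeResolution S N, Function.Surjective (RTensor.mapRight S M (res.d 0))
  | (i+1) => ∀ res : FreeResolution S N,
      Function.Exact (RTensor.mapRight S M (res.d (i+1))) (RTensor.mapRight S M (res.d i))

/-- A left `S`-module `N` is flat if `Tor₁^S(M, N) = 0` for every right `S`-module `M`. -/
def IsFlatModule : Prop :=
  ∀ (M : Type) [AddCommGroup M] [Module Sᵐᵒᵖ M], TorVanishes S N M 1

end Resolutions

/-- `Tor_i^S(M, N) = 0` for a right `S`-module `M` and a left `S`-module `N`. -/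
def TorIsZero (S : Type) [Ring S] (M : Type) [AddCommGroup M] [Module Sᵐᵒᵖ M]
    (N : Type) [AddCommGroup N] [Module S N] (i : ℕ) : Prop :=
  TorVanishes S N M i

section GroupRings

variable (R : Type) [Ring R] (G : Type) [Group G]

/-- The augmentation ring homomorphism `R[G] → R`, `∑ r_g g ↦ ∑ r_g`. -/
def augMap : MonoidAlgebra R G →+* R :=
  MonoidAlgebra.liftNCRingHom (RingHom.id R) (1 : G →* R)
    (fun x y => by simp [Commute.one_right])

/-- The augmentation ideal of `R[G]`, as a left ideal. -/
def augIdeal : Ideal (MonoidAlgebra R G) := RingHom.ker (augMap R G)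

/-- The augmentation ideal of `R[G]`, as a right `R[G]`-module. -/
def augIdealRight : Submodule (MonoidAlgebra R G)ᵐᵒᵖ (MonoidAlgebra R G) where
  carrier := {x | augMap R G x = 0}
  add_mem' := by
    intro a b ha hb
    simp only [Set.mem_setOf_eq, map_add] at *
    rw [ha, hb, add_zero]
  zero_mem' := by simp
  smul_mem' := by
    intro c x hx
    simp only [Set.mem_setOf_eq] at *
    have : c • x = x * c.unop := rfl
    rw [this, map_mul, hx, zero_mul]

/-- The trivial left `R[G]`-module structure on `R`. -/
def trivialModule : Module (MonoidAlgebra R G) R := Module.compHom R (augMap R G)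

/-- The trivial right `R[G]`-module structure on `R`. -/
def trivialModuleRight : Module (MonoidAlgebra R G)ᵐᵒᵖ R :=
  Module.compHom R (RingHom.op (augMap R G))

/-- The group `G` is of type `FPₙ(R)`: the trivial `R[G]`-module `R` is of type `FPₙ`. -/
def GroupIsFP (n : ℕ) : Prop :=
  letI := trivialModule R G
  IsFPMod (MonoidAlgebra R G) n R

end GroupRings
section Novikov

variable (R : Type) [Ring R] (G : Type) [Group G]

/-- Left multiplication by elements of `R` on functions `G → R`. -/
def lmulHom : R →+* Module.End ℤ (G → R) where
  toFun r :=
    { toFun := fun a x => r * a x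
      map_add' := by intro a b; funext x; simp [mul_add]
      map_smul' := by
        intro z a; funext x
        simp only [zsmul_eq_mul, Pi.intCast_apply, Pi.mul_apply, eq_intCast, RingHom.id_apply]
        rw [← mul_assoc, ← Int.cast_comm, mul_assoc]
        norm_cast }
  map_one' := by ext a x; simp
  map_mul' := by intro r s; ext a x; simp [mul_assoc]
  map_zero' := by ext a x; simp
  map_add' := by intro r s; ext a x; simp [add_mul]

/-- The (left) translation action of `G` on functions `G → R`. -/
def translationHom : G →* Module.End ℤ (G → R) where
  toFun h :=
    { toFun := fun a x => a (h⁻¹ * x)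
      map_add' := by intro a b; funext x; simp
      map_smul' := by intro z a; funext x; simp }
  map_one' := by ext a x; simp
  map_mul' := by intro g h; ext a x; simp [mul_assoc]

/-- The convolution action of `R[G]` on functions `G → R`, as a ring homomorphism
into additive endomorphisms. -/
def convolutionRho : MonoidAlgebra R G →+* Module.End ℤ (G → R) :=
  MonoidAlgebra.liftNCRingHom (lmulHom R G) (translationHom R G)
    (by
      intro r h
      ext a x
      simp [lmulHom, translationHom])

/-- The left `R[G]`-module structure on all functions `G → R` given by convolution. -/
def functionsModule : Module (MonoidAlgebra R G) (G → R) :=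
  Module.compHom (G → R) (convolutionRho R G)

/-- The defining support condition for the Novikov ring: for any `c`, only finitely many
elements of the support have `χ`-value at most `c`. -/
def NovikovSet (χ : G →* Multiplicative ℤ) : Set (G → R) :=
  {a | ∀ c : ℤ, {g : G | a g ≠ 0 ∧ (χ g).toAdd ≤ c}.Finite}

theorem NovikovSet.add_mem {χ : G →* Multiplicative ℤ} {a b : G → R}
    (ha : a ∈ NovikovSet R G χ) (hb : b ∈ NovikovSet R G χ) :
    a + b ∈ NovikovSet R G χ := by
  intro c
  refine ((ha c).union (hb c)).subset ?_
  rintro g ⟨hne, hle⟩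
  by_cases h1 : a g = 0
  · exact Or.inr ⟨by intro h2; exact hne (by simp [Pi.add_apply, h1, h2]), hle⟩
  · exact Or.inl ⟨h1, hle⟩

theorem NovikovSet.zero_mem (χ : G →* Multiplicative ℤ) : (0 : G → R) ∈ NovikovSet R G χ := by
  intro c
  convert Set.finite_empty using 1
  ext g; simp

theorem NovikovSet.single_smul_mem {χ : G →* Multiplicative ℤ} (h : G) (b : R) {a : G → R}
    (ha : a ∈ NovikovSet R G χ) :
    (fun x => b * a (h⁻¹ * x)) ∈ NovikovSet R G χ := by
  intro c
  refine ((ha (c - (χ h).toAdd)).image (fun g => h * g)).subset ?_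
  rintro g ⟨hne, hle⟩
  refine ⟨h⁻¹ * g, ⟨?_, ?_⟩, by simp⟩
  · intro h0
    apply hne
    show b * a (h⁻¹ * g) = 0
    rw [h0, mul_zero]
  · have hval : (χ (h⁻¹ * g)).toAdd = -(χ h).toAdd + (χ g).toAdd := by
      simp [map_mul]
    rw [hval]
    omega

/-- The Novikov completion `\widehat{R[G]}^χ` of `R[G]` at the character `χ`,
as a left `R[G]`-submodule of the module of all functions `G → R`. -/
def Novikov (χ : G →* Multiplicative ℤ) :
    @Submodule (MonoidAlgebra R G) (G → R) _ _ (functionsModule R G) :=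
  letI := functionsModule R G
  { carrier := NovikovSet R G χ
    add_mem' := by
      intro a b ha hb
      intro c
      refine ((ha c).union (hb c)).subset ?_
      intro g hg
      rcases hg with ⟨hne, hle⟩
      by_cases h1 : a g = 0
      · exact Or.inr ⟨by intro h2; exact hne (by simp [Pi.add_apply, h1, h2]), hle⟩
      · exact Or.inl ⟨h1, hle⟩
    zero_mem' := by
      intro c
      convert Set.finite_empty using 1
      ext g; simp
    smul_mem' := by
      intro c a ha
      show (convolutionRho R G c) a ∈ NovikovSet R G χ
      induction c using MonoidAlgebra.induction with
      | zero => simpa using NovikovSet.zero_mem R G χ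
      | single_add h b f _ _ ih =>
        rw [map_add]
        have hadd : (convolutionRho R G (MonoidAlgebra.single h b)
              + convolutionRho R G f) a
            = (convolutionRho R G (MonoidAlgebra.single h b)) a
              + (convolutionRho R G f) a := rfl
        rw [hadd]
        refine NovikovSet.add_mem R G ?_ ih
        have hsingle : (convolutionRho R G (MonoidAlgebra.single h b)) a
            = fun x => b * a (h⁻¹ * x) := by
          show (MonoidAlgebra.liftNC ((lmulHom R G) : R →+ Module.End ℤ (G → R))
              ⇑(translationHom R G)) (MonoidAlgebra.single h b) a = _
          rw [MonoidAlgebra.liftNC_single]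
          rfl
        rw [hsingle]
        exact NovikovSet.single_smul_mem R G h b ha }

end Novikov

section SES

variable (R : Type) [Ring R] (G : Type) [Group G]

theorem finsupp_mem_novikovSet (χ : G →* Multiplicative ℤ) (x : MonoidAlgebra R G) :
    ⇑x.coeff ∈ NovikovSet R G χ := fun _c => x.coeff.finite_support.subset fun _g hg => hg.1

theorem component_support_finite (χ : G →* Multiplicative ℤ) (t : G)
    (ht : χ t = Multiplicative.ofAdd 1) (a : G → R) (ha : a ∈ NovikovSet R G χ) (i : ℤ) :
    (Function.support fun nn : ↥χ.ker => a ((nn : G) * t ^ i)).Finite := by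
  have hinj : Function.Injective (fun nn : ↥χ.ker => (nn : G) * t ^ i) := by
    intro u v huv
    exact Subtype.ext (mul_right_cancel huv)
  refine ((ha i).preimage hinj.injOn).subset ?_
  intro nn hnn
  refine ⟨hnn, ?_⟩
  have h1 : χ (nn : G) = 1 := nn.2
  simp [map_zpow, h1, ht]

theorem component_support_finite' (χ : G →* Multiplicative ℤ) (t : G)
    (ht : χ t = Multiplicative.ofAdd 1) (a : G → R) (ha : a ∈ NovikovSet R G χ⁻¹) (i : ℤ) :
    (Function.support fun nn : ↥χ.ker => a ((nn : G) * t ^ i)).Finite := by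
  have hinj : Function.Injective (fun nn : ↥χ.ker => (nn : G) * t ^ i) := by
    intro u v huv
    exact Subtype.ext (mul_right_cancel huv)
  refine ((ha (-i)).preimage hinj.injOn).subset ?_
  intro nn hnn
  refine ⟨hnn, ?_⟩
  have h1 : χ (nn : G) = 1 := nn.2
  simp [map_zpow, h1, ht]

/-- The map `R[G] → \widehat{R[G]}^χ ⊕ \widehat{R[G]}^{-χ}` induced by the two canonical
inclusions. -/
def sesInto (χ : G →* Multiplicative ℤ) :
    MonoidAlgebra R G → ↥(Novikov R G χ) × ↥(Novikov R G χ⁻¹) :=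
  fun x => (⟨⇑x.coeff, finsupp_mem_novikovSet R G χ x⟩, ⟨⇑x.coeff, finsupp_mem_novikovSet R G χ⁻¹ x⟩)

/-- The map `\widehat{R[G]}^χ ⊕ \widehat{R[G]}^{-χ} → ∏_ℤ R[N]` given by forming the
difference of the expansions `x = ∑_{i ∈ ℤ} λ_i t^i` with `λ_i ∈ R[N]`. -/
def sesOnto (χ : G →* Multiplicative ℤ) (t : G) (ht : χ t = Multiplicative.ofAdd 1) :
    ↥(Novikov R G χ) × ↥(Novikov R G χ⁻¹) → (ℤ → MonoidAlgebra R ↥χ.ker) :=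
  fun p i =>
    MonoidAlgebra.ofCoeff (Finsupp.ofSupportFinite (fun nn : ↥χ.ker => p.1.1 ((nn : G) * t ^ i))
      (component_support_finite R G χ t ht p.1.1 p.1.2 i)
    - Finsupp.ofSupportFinite (fun nn : ↥χ.ker => p.2.1 ((nn : G) * t ^ i))
      (component_support_finite' R G χ t ht p.2.1 p.2.2 i))

variable {R G}

theorem convolutionRho_single_apply (h : G) (b : R) (a : G → R) :
    convolutionRho R G (MonoidAlgebra.single h b) a = fun x => b * a (h⁻¹ * x) := by
  show (MonoidAlgebra.liftNC ((lmulHom R G) : R →+ Module.End ℤ (G → R))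
      ⇑(translationHom R G)) (MonoidAlgebra.single h b) a = _
  rw [MonoidAlgebra.liftNC_single]
  rfl

theorem convolutionRho_coeff (z x : MonoidAlgebra R G) :
    convolutionRho R G z x.coeff = (z * x).coeff := by
  induction z using MonoidAlgebra.induction_linear with
  | zero => rw [map_zero, zero_mul]; rfl
  | add z z' hz hz' => rw [map_add, LinearMap.add_apply, hz, hz', add_mul]; rfl
  | single h b => funext g; rw [convolutionRho_single_apply, MonoidAlgebra.coeff_single_mul_apply]

section CosetCoefficients

variable (H : Subgroup G) (s : G)

def cosetCoeffs (a : G → R) (ha : (support fun n : H => a (n * s)).Finite) :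
    MonoidAlgebra R H :=
  MonoidAlgebra.ofCoeff (Finsupp.ofSupportFinite _ ha)

theorem convolutionRho_mapDomain_apply_mul (y : MonoidAlgebra R H) (a : G → R)
    (ha : (support fun n : H => a (n * s)).Finite) (n : H) :
    convolutionRho R G (MonoidAlgebra.mapDomain H.subtype y) a (n * s)
      = (y * cosetCoeffs H s a ha).coeff n := by
  induction y using MonoidAlgebra.induction_linear with
  | zero => rw [MonoidAlgebra.mapDomain_zero, map_zero, zero_mul]; rfl
  | add y y' hy hy' =>
    rw [MonoidAlgebra.mapDomain_add, map_add, LinearMap.add_apply, Pi.add_apply, hy, hy',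
      add_mul]
    rfl
  | single m b =>
    rw [MonoidAlgebra.mapDomain_single, convolutionRho_single_apply,
      MonoidAlgebra.coeff_single_mul_apply]
    show b * a ((m : G)⁻¹ * (n * s)) = b * a ((m⁻¹ * n : H) * s)
    simp [mul_assoc]

end CosetCoefficients

section Expansion

variable {χ : G →* Multiplicative ℤ} {t : G}

theorem toAdd_apply_mul_zpow (ht : χ t = Multiplicative.ofAdd 1) (n : χ.ker) (i : ℤ) :
    (χ (n * t ^ i)).toAdd = i := by
  simp [MonoidHom.mem_ker.1 n.2, ht]

def kerPart (ht : χ t = Multiplicative.ofAdd 1) (g : G) : χ.ker :=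
  ⟨g * (t ^ (χ g).toAdd)⁻¹, by simp [MonoidHom.mem_ker, ht, ← ofAdd_zsmul]⟩

theorem kerPart_mul_zpow_toAdd (ht : χ t = Multiplicative.ofAdd 1) (g : G) :
    (kerPart ht g : G) * t ^ (χ g).toAdd = g :=
  inv_mul_cancel_right _ _

theorem kerPart_mul_zpow (ht : χ t = Multiplicative.ofAdd 1) (n : χ.ker) (i : ℤ) :
    kerPart ht (n * t ^ i) = n := by
  apply Subtype.ext
  show (n : G) * t ^ i * (t ^ (χ (n * t ^ i)).toAdd)⁻¹ = n
  rw [toAdd_apply_mul_zpow ht, mul_inv_cancel_right]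

theorem funext_mul_zpow (ht : χ t = Multiplicative.ofAdd 1) {β : Type*} {a b : G → β}
    (h : ∀ (n : χ.ker) (i : ℤ), a (n * t ^ i) = b (n * t ^ i)) : a = b :=
  funext fun g => by simpa only [kerPart_mul_zpow_toAdd] using h (kerPart ht g) (χ g).toAdd

def ofComponents (ht : χ t = Multiplicative.ofAdd 1) (f : ℤ → MonoidAlgebra R χ.ker) : G → R :=
  fun g => (f (χ g).toAdd).coeff (kerPart ht g)

theorem ofComponents_mul_zpow (ht : χ t = Multiplicative.ofAdd 1) (f : ℤ → MonoidAlgebra R χ.ker)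
    (n : χ.ker) (i : ℤ) :
    ofComponents ht f (n * t ^ i) = (f i).coeff n := by
  simp only [ofComponents, kerPart_mul_zpow, toAdd_apply_mul_zpow ht]

theorem NovikovSet.support_finite_of_mem_inv {a : G → R} (h : a ∈ NovikovSet R G χ)
    (h' : a ∈ NovikovSet R G χ⁻¹) : (support a).Finite :=
  ((h 0).union (h' 0)).subset fun g hg => by
    rcases le_total (χ g).toAdd 0 with hle | hle
    · exact Or.inl ⟨hg, hle⟩
    · exact Or.inr ⟨hg, by simpa using hle⟩

theorem finite_setOf_ofComponents_ne_zero (ht : χ t = Multiplicative.ofAdd 1)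
    (f : ℤ → MonoidAlgebra R χ.ker) {I : Set ℤ} (hI : {i ∈ I | f i ≠ 0}.Finite) :
    {g | ofComponents ht f g ≠ 0 ∧ (χ g).toAdd ∈ I}.Finite := by
  refine (hI.biUnion fun i _ => (f i).coeff.support.finite_toSet.image
    fun n : χ.ker => (n : G) * t ^ i).subset ?_
  rintro g ⟨hne, hg⟩
  exact Set.mem_biUnion ⟨hg, fun h0 => hne (by simp [ofComponents, h0])⟩
    ⟨kerPart ht g, Finsupp.mem_support_iff.2 hne, kerPart_mul_zpow_toAdd ht g⟩

theorem ofComponents_mem_novikovSet (ht : χ t = Multiplicative.ofAdd 1)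
    {f : ℤ → MonoidAlgebra R χ.ker} (hf : ∀ i < 0, f i = 0) :
    ofComponents ht f ∈ NovikovSet R G χ := fun c =>
  finite_setOf_ofComponents_ne_zero ht f (I := Set.Iic c) <|
    (Set.finite_Icc 0 c).subset fun i ⟨hic, hi⟩ => ⟨not_lt.1 fun h => hi (hf i h), hic⟩

theorem ofComponents_mem_novikovSet_inv (ht : χ t = Multiplicative.ofAdd 1)
    {f : ℤ → MonoidAlgebra R χ.ker} (hf : ∀ i, 0 ≤ i → f i = 0) :
    ofComponents ht f ∈ NovikovSet R G χ⁻¹ := fun c =>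
  (finite_setOf_ofComponents_ne_zero ht f (I := Set.Ici (-c)) <|
    (Set.finite_Icc (-c) 0).subset fun i ⟨hic, hi⟩ =>
      ⟨hic, le_of_not_ge fun h => hi (hf i h)⟩).subset
    fun g ⟨hne, hle⟩ => ⟨hne, neg_le.1 (by simpa using hle)⟩

theorem sesOnto_apply (ht : χ t = Multiplicative.ofAdd 1)
    (p : Novikov R G χ × Novikov R G χ⁻¹) (i : ℤ) :
    sesOnto R G χ t ht p i
      = cosetCoeffs χ.ker (t ^ i) p.1.1 (component_support_finite R G χ t ht p.1.1 p.1.2 i)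
        - cosetCoeffs χ.ker (t ^ i) p.2.1 (component_support_finite' R G χ t ht p.2.1 p.2.2 i) :=
  rfl

theorem sesOnto_coeff (ht : χ t = Multiplicative.ofAdd 1)
    (p : Novikov R G χ × Novikov R G χ⁻¹) (i : ℤ) (n : χ.ker) :
    (sesOnto R G χ t ht p i).coeff n = p.1.1 (n * t ^ i) - p.2.1 (n * t ^ i) :=
  rfl

theorem sesInto_injective (χ : G →* Multiplicative ℤ) : Injective (sesInto R G χ) :=
  fun _ _ h => MonoidAlgebra.ext (Finsupp.ext (congrFun (congrArg (fun p => p.1.1) h)))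

theorem sesInto_exact (ht : χ t = Multiplicative.ofAdd 1) :
    Exact (sesInto R G χ) (sesOnto R G χ t ht) := by
  intro p
  constructor
  · intro h
    have hab : p.1.1 = p.2.1 := funext_mul_zpow ht fun n i => sub_eq_zero.1 <| by
      rw [← sesOnto_coeff ht, h]
      rfl
    refine ⟨MonoidAlgebra.ofCoeff (Finsupp.ofSupportFinite p.1.1
      (NovikovSet.support_finite_of_mem_inv p.1.2 (hab ▸ p.2.2))), ?_⟩
    exact Prod.ext (Subtype.ext Finsupp.ofSupportFinite_coe)
      (Subtype.ext (Finsupp.ofSupportFinite_coe.trans hab))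
  · rintro ⟨x, rfl⟩
    funext i
    exact congrArg MonoidAlgebra.ofCoeff (sub_self _)

theorem sesOnto_surjective (ht : χ t = Multiplicative.ofAdd 1) :
    Surjective (sesOnto R G χ t ht) := by
  intro f
  let fPos : ℤ → MonoidAlgebra R χ.ker := fun i => if 0 ≤ i then f i else 0
  let fNeg : ℤ → MonoidAlgebra R χ.ker := fun i => if 0 ≤ i then 0 else -f i
  refine ⟨(⟨ofComponents ht fPos, ofComponents_mem_novikovSet ht fun i hi => if_neg hi.not_ge⟩,
    ⟨ofComponents ht fNeg, ofComponents_mem_novikovSet_inv ht fun i hi => if_pos hi⟩), ?_⟩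
  funext i
  refine MonoidAlgebra.ext (Finsupp.ext fun n => ?_)
  rw [sesOnto_coeff]
  dsimp only
  rw [ofComponents_mul_zpow, ofComponents_mul_zpow]
  by_cases hi : 0 ≤ i <;> simp [fPos, fNeg, hi]

end Expansion

theorem stmt_5_general (R : Type) [Ring R] (G : Type) [Group G] (χ : G →* Multiplicative ℤ)
    (t : G) (ht : χ t = Multiplicative.ofAdd 1) :
    Function.Injective (sesInto R G χ) ∧
    Function.Exact (sesInto R G χ) (sesOnto R G χ t ht) ∧
    Function.Surjective (sesOnto R G χ t ht) ∧
    (letI := functionsModule R G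
     letI : Module (MonoidAlgebra R ↥χ.ker) (MonoidAlgebra R G) :=
       Module.compHom _ (MonoidAlgebra.mapDomainRingHom R χ.ker.subtype)
     letI : Module (MonoidAlgebra R ↥χ.ker) ↥(Novikov R G χ) :=
       Module.compHom _ (MonoidAlgebra.mapDomainRingHom R χ.ker.subtype)
     letI : Module (MonoidAlgebra R ↥χ.ker) ↥(Novikov R G χ⁻¹) :=
       Module.compHom _ (MonoidAlgebra.mapDomainRingHom R χ.ker.subtype)
     (∀ (y : MonoidAlgebra R ↥χ.ker) (x : MonoidAlgebra R G),
        sesInto R G χ (y • x) = y • sesInto R G χ x) ∧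
     (∀ (y : MonoidAlgebra R ↥χ.ker) (p : ↥(Novikov R G χ) × ↥(Novikov R G χ⁻¹)),
        sesOnto R G χ t ht (y • p) = y • sesOnto R G χ t ht p)) := by
  refine ⟨sesInto_injective χ, sesInto_exact ht, sesOnto_surjective ht, fun y x => ?_,
    fun y p => ?_⟩
  · have h := convolutionRho_coeff (MonoidAlgebra.mapDomain χ.ker.subtype y) x
    exact Prod.ext (Subtype.ext h.symm) (Subtype.ext h.symm)
  · funext i
    refine MonoidAlgebra.ext (Finsupp.ext fun n => ?_)
    show convolutionRho R G (MonoidAlgebra.mapDomain χ.ker.subtype y) p.1.1 (n * t ^ i)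
        - convolutionRho R G (MonoidAlgebra.mapDomain χ.ker.subtype y) p.2.1 (n * t ^ i)
      = (y * sesOnto R G χ t ht p i).coeff n
    rw [sesOnto_apply, mul_sub, MonoidAlgebra.coeff_sub, convolutionRho_mapDomain_apply_mul,
      convolutionRho_mapDomain_apply_mul]
    rfl

/-- For a surjective character `χ : G → ℤ` with kernel `N` and `t ∈ G`
with `χ(t) = 1`, there is a short exact sequence of left `R[N]`-modules
`0 → R[G] → \widehat{R[G]}^χ ⊕ \widehat{R[G]}^{-χ} → ∏_ℤ R[N] → 0`. -/
theorem stmt_5 (R : Type) [Ring R] (G : Type) [Group G] (χ : G →* Multiplicative ℤ)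
    (hχ : Function.Surjective χ) (t : G) (ht : χ t = Multiplicative.ofAdd 1) :
    Function.Injective (sesInto R G χ) ∧
    Function.Exact (sesInto R G χ) (sesOnto R G χ t ht) ∧
    Function.Surjective (sesOnto R G χ t ht) ∧
    (letI := functionsModule R G
     letI : Module (MonoidAlgebra R ↥χ.ker) (MonoidAlgebra R G) :=
       Module.compHom _ (MonoidAlgebra.mapDomainRingHom R χ.ker.subtype)
     letI : Module (MonoidAlgebra R ↥χ.ker) ↥(Novikov R G χ) :=
       Module.compHom _ (MonoidAlgebra.mapDomainRingHom R χ.ker.subtype)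
     letI : Module (MonoidAlgebra R ↥χ.ker) ↥(Novikov R G χ⁻¹) :=
       Module.compHom _ (MonoidAlgebra.mapDomainRingHom R χ.ker.subtype)
     (∀ (y : MonoidAlgebra R ↥χ.ker) (x : MonoidAlgebra R G),
        sesInto R G χ (y • x) = y • sesInto R G χ x) ∧
     (∀ (y : MonoidAlgebra R ↥χ.ker) (p : ↥(Novikov R G χ) × ↥(Novikov R G χ⁻¹)),
        sesOnto R G χ t ht (y • p) = y • sesOnto R G χ t ht p)) :=
  stmt_5_general R G χ t ht

end SES
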